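/- Let x < y be two consecutive elements of Ξ_n (n ≥ 1) and suppose the mediant x ⊕ y belongs to Θ_k. Then for every m ≥ k, #{ ξ ∈ Ξ_m : x < ξ ≤ x ⊕ y } = F_{m−k+1}. -/

import Mathlib

open Set Filter

/-- The mediant of two rationals (written in lowest terms). -/
def mediant (x y : ℚ) : ℚ :=
  ((x.num + y.num : ℤ) : ℚ) / ((x.den + y.den : ℕ) : ℚ)

/-- `x` and `y` are consecutive elements of the set `S`. -/
def IsConsecutive (S : Set ℚ) (x y : ℚ) : Prop :=
  x ∈ S ∧ y ∈ S ∧ x < y ∧ ∀ z ∈ S, ¬ (x < z ∧ z < y)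

/-- The Stern–Brocot sequences `ℱ_n`. -/
def sternBrocot : ℕ → Set ℚ
  | 0 => {0, 1}
  | n + 1 => sternBrocot n ∪
      {z | ∃ x y : ℚ, IsConsecutive (sternBrocot n) x y ∧ z = mediant x y}

/-- `Q_n`, the set of mediants newly inserted at step `n ≥ 1` of the
Stern–Brocot construction. -/
def newMediants (n : ℕ) : Set ℚ :=
  {z | ∃ x y : ℚ, IsConsecutive (sternBrocot (n - 1)) x y ∧ z = mediant x y}

/-- Value of the regular continued fraction `[0; a_1, …, a_m]`. -/
def cfVal : List ℕ → ℚ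
  | [] => 0
  | a :: t => 1 / ((a : ℚ) + cfVal t)

/-- `a` is the regular continued fraction expansion `[0; a_1, …, a_m]` of `x`,
with all partial quotients positive and the last one at least `2`. -/
def IsCF (x : ℚ) (a : List ℕ) : Prop :=
  (∀ ai ∈ a, 1 ≤ ai) ∧ 2 ≤ a.getLastD 0 ∧ x = cfVal a

/-- Value of `b_1 - 1/(b_2 - ⋯ - 1/b_l)` (using the convention `1/0 = 0`,
so that `rrTail [b] = b`). -/
def rrTail : List ℕ → ℚ
  | [] => 0
  | b :: t => (b : ℚ) - 1 / rrTail t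

/-- Value of the regular reduced continued fraction
`[[1; b_1, …, b_l]] = 1 - 1/(b_1 - 1/(b_2 - ⋯ - 1/b_l))`. -/
def rrcfVal (b : List ℕ) : ℚ := 1 - 1 / rrTail b

/-- `b` is the regular reduced continued fraction expansion
`[[1; b_1, …, b_l]]` of `x`, with all entries at least `2`. -/
def IsRRCF (x : ℚ) (b : List ℕ) : Prop :=
  (∀ bi ∈ b, 2 ≤ bi) ∧ x = rrcfVal b

/-- `Θ_k`: rationals in `(0,1)` whose regular reduced continued fraction
expansion satisfies `L(x) = b_1 + ⋯ + b_l = k + 1`. -/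
def Theta (k : ℕ) : Set ℚ :=
  {x | x ∈ Set.Ioo (0 : ℚ) 1 ∧ ∃ b : List ℕ, IsRRCF x b ∧ b.sum = k + 1}

/-- `Ξ_n = {0, 1} ∪ Θ_1 ∪ ⋯ ∪ Θ_n`. -/
def Xi (n : ℕ) : Set ℚ :=
  {0, 1} ∪ ⋃ k ∈ Finset.Icc 1 n, Theta k

/-
Lists `c` with entries `≥ 2` form a binary tree: the children of `c` are `c ++ [2]` and `c` with
its last entry raised by one, and `L` grows by `2` and by `1` along these edges. Attaching to `c`
the interval from `leftEnd c` to `rightEnd c = [[1; c.dropLast]]` gives the Stern–Brocot tree of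
`(0, 1)`: the ends of every interval are Farey neighbours, `[[1; c]]` is their mediant, and the
children split the interval at `[[1; c]]`. A fraction strictly between Farey neighbours has
denominator at least that of their mediant, so every `g` with `[[1; g]]` in the interval of `c`
is reached by descending from `c`, and `L(g) ≥ L(c)`. Hence the number `N(r)` of points of `Ξ_n`
inside the interval of a node with `L(c) = n + 3 - r` satisfies `N(r + 2) = 1 + N(r) + N(r + 1)`,
so `N(r) + 1 = F_{r+1}`. Consecutive `x < y` in `Ξ_n` are the ends of the interval of a node `c`,
so `x ⊕ y = [[1; c]]`, and the points counted are `[[1; c]]` and those in the interval of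
`c ++ [2]`.
-/

theorem Set.ncard_inter_Ioo {α : Type*} [LinearOrder α] {S : Set α} (hS : S.Finite) {l v r : α}
    (hlv : l < v) (hvr : v < r) (hv : v ∈ S) :
    (S ∩ Ioo l r).ncard = (S ∩ Ioo l v).ncard + (S ∩ Ioo v r).ncard + 1 := by
  have hsplit : S ∩ Ioo l r = insert v (S ∩ Ioo l v ∪ S ∩ Ioo v r) := by
    rw [← Set.Ioc_union_Ioo_eq_Ioo hlv.le hvr, ← Set.Ioo_insert_right hlv, Set.insert_union,
      Set.inter_insert_of_mem hv, Set.inter_union_distrib_left]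
  have hdisj : Disjoint (S ∩ Ioo l v) (S ∩ Ioo v r) :=
    Set.disjoint_left.mpr fun q h1 h2 => h1.2.2.not_gt h2.2.1
  have hfin (a b : α) : (S ∩ Ioo a b).Finite := hS.inter_of_left _
  rw [hsplit, Set.ncard_insert_of_notMem (by simp) ((hfin _ _).union (hfin _ _)),
    Set.ncard_union_eq hdisj (hfin _ _) (hfin _ _)]

def FareyNeighbors (p r : ℚ) : Prop :=
  r.num * p.den - p.num * r.den = 1

namespace FareyNeighbors

variable {p q r : ℚ}

theorem lt (h : FareyNeighbors p r) : p < r := by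
  rw [Rat.lt_iff]
  unfold FareyNeighbors at h
  linarith

private theorem isCoprime_mediant (h : FareyNeighbors p r) :
    Nat.Coprime (p.num + r.num).natAbs ((p.den + r.den : ℕ) : ℤ).natAbs :=
  Int.isCoprime_iff_gcd_eq_one.mp
    ⟨-r.den, r.num, by push_cast; unfold FareyNeighbors at h; linear_combination h⟩

theorem num_mediant (h : FareyNeighbors p r) : (mediant p r).num = p.num + r.num := by
  rw [mediant, ← Int.cast_natCast]
  exact Rat.num_div_eq_of_coprime (by positivity) h.isCoprime_mediant

theorem den_mediant (h : FareyNeighbors p r) : (mediant p r).den = p.den + r.den := by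
  rw [mediant, ← Int.cast_natCast]
  exact_mod_cast Rat.den_div_eq_of_coprime (by positivity) h.isCoprime_mediant

theorem mediant_left (h : FareyNeighbors p r) : FareyNeighbors p (mediant p r) := by
  rw [FareyNeighbors, h.num_mediant, h.den_mediant]
  unfold FareyNeighbors at h
  push_cast
  linear_combination h

theorem mediant_right (h : FareyNeighbors p r) : FareyNeighbors (mediant p r) r := by
  rw [FareyNeighbors, h.num_mediant, h.den_mediant]
  unfold FareyNeighbors at h
  push_cast
  linear_combination h

theorem den_add_le (h : FareyNeighbors p r) (hpq : p < q) (hqr : q < r) :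
    p.den + r.den ≤ q.den := by
  rw [Rat.lt_iff] at hpq hqr
  unfold FareyNeighbors at h
  have hq : (q.den : ℤ) = p.den * (r.num * q.den - q.num * r.den) +
      r.den * (q.num * p.den - p.num * q.den) := by
    linear_combination (-(q.den : ℤ)) * h
  have hp : (0 : ℤ) < p.den := by positivity
  have hr : (0 : ℤ) < r.den := by positivity
  zify
  nlinarith

end FareyNeighbors

namespace RRCF

variable {a b n : ℕ} {c t : List ℕ} {q : ℚ}

def Admissible (c : List ℕ) : Prop := ∀ b ∈ c, 2 ≤ b

theorem Admissible.tail (h : Admissible (b :: t)) : Admissible t :=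
  fun x hx => h x (List.mem_cons_of_mem _ hx)

theorem Admissible.head (h : Admissible (b :: t)) : 2 ≤ b := h b List.mem_cons_self

theorem Admissible.of_append (h : Admissible (t ++ [a])) : Admissible t :=
  fun x hx => h x (List.mem_append_left _ hx)

theorem Admissible.last (h : Admissible (t ++ [a])) : 2 ≤ a := h a (by simp)

theorem Admissible.append (ht : Admissible t) (ha : 2 ≤ a) : Admissible (t ++ [a]) := by
  simpa [Admissible, or_imp, forall_and] using ⟨ht, ha⟩

theorem Admissible.dropLast (h : Admissible c) : Admissible c.dropLast :=
  fun x hx => h x (List.dropLast_subset _ hx)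

theorem rrTail_nil : rrTail [] = 0 := rfl

@[simp] theorem rrcfVal_nil : rrcfVal [] = 1 := by simp [rrcfVal, rrTail_nil]

/-- The continuants `(A, B)` of `c`, with `rrTail c = A / B`. -/
def cont : List ℕ → ℤ × ℤ
  | [] => (1, 0)
  | b :: t => (b * (cont t).1 - (cont t).2, (cont t).1)

theorem cont_snd_nonneg_and_lt (hc : Admissible c) :
    0 ≤ (cont c).2 ∧ (cont c).2 < (cont c).1 := by
  induction c with
  | nil => simp [cont]
  | cons b t ih =>
    obtain ⟨h0, h1⟩ := ih hc.tail
    have hb : (2 : ℤ) ≤ b := by exact_mod_cast hc.head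
    exact ⟨by simp only [cont]; omega, by simp only [cont]; nlinarith⟩

theorem cont_fst_pos (hc : Admissible c) : 0 < (cont c).1 :=
  (cont_snd_nonneg_and_lt hc).1.trans_lt (cont_snd_nonneg_and_lt hc).2

theorem cont_snd_pos (hc : Admissible c) (hne : c ≠ []) : 0 < (cont c).2 := by
  obtain ⟨b, t, rfl⟩ := List.exists_cons_of_ne_nil hne
  exact cont_fst_pos hc.tail

theorem isCoprime_cont (c : List ℕ) : IsCoprime (cont c).1 (cont c).2 := by
  induction c with
  | nil => exact isCoprime_one_left
  | cons b t ih => exact IsCoprime.mul_sub_right_left_iff.mpr ih.symm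

theorem rrTail_eq_div (hc : Admissible c) : rrTail c = (cont c).1 / (cont c).2 := by
  induction c with
  | nil => simp [rrTail, cont]
  | cons b t ih =>
    have hA : ((cont t).1 : ℚ) ≠ 0 := by exact_mod_cast (cont_fst_pos hc.tail).ne'
    rw [rrTail, ih hc.tail, cont]
    push_cast
    field_simp

theorem rrcfVal_eq_div (hc : Admissible c) :
    rrcfVal c = ((cont c).1 - (cont c).2 : ℤ) / (cont c).1 := by
  have hA : ((cont c).1 : ℚ) ≠ 0 := by exact_mod_cast (cont_fst_pos hc).ne'
  rw [rrcfVal, rrTail_eq_div hc]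
  push_cast
  field_simp

private theorem coprime_natAbs_cont (c : List ℕ) :
    Nat.Coprime ((cont c).1 - (cont c).2).natAbs (cont c).1.natAbs :=
  Int.isCoprime_iff_gcd_eq_one.mp <| by
    simpa [neg_add_eq_sub] using (isCoprime_cont c).symm.neg_left.add_mul_left_left 1

theorem num_rrcfVal (hc : Admissible c) : (rrcfVal c).num = (cont c).1 - (cont c).2 := by
  rw [rrcfVal_eq_div hc]
  exact Rat.num_div_eq_of_coprime (cont_fst_pos hc) (coprime_natAbs_cont c)

theorem den_rrcfVal (hc : Admissible c) : ((rrcfVal c).den : ℚ) = (cont c).1 := by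
  rw [rrcfVal_eq_div hc]
  exact_mod_cast Rat.den_div_eq_of_coprime (cont_fst_pos hc) (coprime_natAbs_cont c)

theorem cont_append (ht : t ≠ []) (a : ℕ) :
    cont (t ++ [a]) = (a : ℤ) • cont t - cont t.dropLast := by
  induction t with
  | nil => exact absurd rfl ht
  | cons b s ih =>
    rcases eq_or_ne s [] with rfl | hs
    · ext <;> simp [cont, mul_comm]
    · rw [List.cons_append, List.dropLast_cons_of_ne_nil hs]
      ext
      · simp [cont, ih hs]; ring
      · simp [cont, ih hs]

theorem cont_append_succ (t : List ℕ) (a : ℕ) :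
    cont (t ++ [a + 1]) = cont (t ++ [a]) + cont t := by
  rcases eq_or_ne t [] with rfl | ht
  · ext <;> simp [cont]
  · rw [cont_append ht, cont_append ht]
    push_cast
    module

def leftEndRev : List ℕ → ℚ
  | [] => 0
  | a :: r => if a = 2 then leftEndRev r else rrcfVal ((a - 1) :: r).reverse

/-- Strip the trailing `2`s of `c` and lower the last remaining entry by one (`0` if nothing
remains). -/
def leftEnd (c : List ℕ) : ℚ := leftEndRev c.reverse

def rightEnd (c : List ℕ) : ℚ := rrcfVal c.dropLast

@[simp] theorem leftEnd_append_two (t : List ℕ) : leftEnd (t ++ [2]) = leftEnd t := by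
  simp [leftEnd, leftEndRev]

theorem leftEnd_append_of_ne_two (t : List ℕ) (ha : a ≠ 2) :
    leftEnd (t ++ [a]) = rrcfVal (t ++ [a - 1]) := by
  simp [leftEnd, leftEndRev, ha]

theorem leftEnd_append_succ (t : List ℕ) (ha : 2 ≤ a) :
    leftEnd (t ++ [a + 1]) = rrcfVal (t ++ [a]) := by
  rw [leftEnd_append_of_ne_two t (by omega), Nat.add_sub_cancel]

@[simp] theorem rightEnd_append (t : List ℕ) (a : ℕ) : rightEnd (t ++ [a]) = rrcfVal t := by
  simp [rightEnd]

theorem leftEnd_eq_zero_or (hc : Admissible c) :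
    leftEnd c = 0 ∨ ∃ e, Admissible e ∧ e.sum < c.sum ∧ leftEnd c = rrcfVal e := by
  induction c using List.reverseRecOn with
  | nil => exact Or.inl rfl
  | append_singleton t a ih =>
    have ha := hc.last
    by_cases h2 : a = 2
    · subst h2
      rw [leftEnd_append_two]
      refine (ih hc.of_append).imp_right fun ⟨e, he, hsum, hval⟩ => ⟨e, he, ?_, hval⟩
      simp only [List.sum_append, List.sum_singleton]
      omega
    · refine Or.inr ⟨t ++ [a - 1], hc.of_append.append (by omega), ?_,
        leftEnd_append_of_ne_two t h2⟩
      simp only [List.sum_append, List.sum_singleton]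
      omega

theorem rrcfVal_append_succ (h : Admissible (t ++ [a])) :
    rrcfVal (t ++ [a + 1]) = mediant (rrcfVal (t ++ [a])) (rrcfVal t) := by
  have h' : Admissible (t ++ [a + 1]) := h.of_append.append (by have := h.last; omega)
  rw [mediant, num_rrcfVal h, num_rrcfVal h.of_append, rrcfVal_eq_div h', cont_append_succ]
  push_cast
  rw [den_rrcfVal h, den_rrcfVal h.of_append, Prod.fst_add, Prod.snd_add]
  push_cast
  ring

theorem rrcfVal_append_two {l : ℚ} (ht : Admissible t) (hne : t ≠ [])
    (hF : FareyNeighbors l (rrcfVal t.dropLast)) (hv : rrcfVal t = mediant l (rrcfVal t.dropLast)) :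
    rrcfVal (t ++ [2]) = mediant l (rrcfVal t) := by
  have hnum : (rrcfVal t).num = l.num + (rrcfVal t.dropLast).num := hv ▸ hF.num_mediant
  have hden : ((rrcfVal t).den : ℚ) = l.den + (rrcfVal t.dropLast).den := by
    exact_mod_cast hv ▸ hF.den_mediant
  rw [num_rrcfVal ht, num_rrcfVal ht.dropLast] at hnum
  rw [den_rrcfVal ht, den_rrcfVal ht.dropLast] at hden
  have hl_num : l.num = (cont t).1 - (cont t).2 - ((cont t.dropLast).1 - (cont t.dropLast).2) := by
    linarith
  have hl_den : (l.den : ℚ) = (cont t).1 - (cont t.dropLast).1 := by linarith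
  rw [mediant, rrcfVal_eq_div (ht.append le_rfl), cont_append hne, num_rrcfVal ht, hl_num]
  push_cast
  rw [den_rrcfVal ht, hl_den]
  simp only [Prod.fst_sub, Prod.snd_sub, Prod.smul_fst, Prod.smul_snd, smul_eq_mul]
  push_cast
  ring

theorem fareyNeighbors_and_eq_mediant {c : List ℕ} (hc : Admissible c) (hne : c ≠ []) :
    FareyNeighbors (leftEnd c) (rightEnd c) ∧ rrcfVal c = mediant (leftEnd c) (rightEnd c) := by
  obtain ⟨t, a, rfl⟩ := (List.eq_nil_or_concat' c).resolve_left hne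
  have ht := hc.of_append
  by_cases h2 : a = 2
  · subst h2
    rcases eq_or_ne t [] with rfl | htne
    · norm_num [FareyNeighbors, mediant, leftEnd, leftEndRev, rightEnd, rrcfVal, rrTail]
    · obtain ⟨hF, hv⟩ := fareyNeighbors_and_eq_mediant ht htne
      rw [leftEnd_append_two, rightEnd_append]
      exact ⟨hv ▸ hF.mediant_left, rrcfVal_append_two ht htne hF hv⟩
  · obtain ⟨a, rfl⟩ : ∃ a', a = a' + 1 := ⟨a - 1, by have := hc.last; omega⟩
    have ha : Admissible (t ++ [a]) := ht.append (by have := hc.last; omega)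
    obtain ⟨hF, hv⟩ := fareyNeighbors_and_eq_mediant ha (by simp)
    rw [rightEnd_append] at hF hv
    rw [leftEnd_append_succ t ha.last, rightEnd_append]
    exact ⟨hv ▸ hF.mediant_right, rrcfVal_append_succ ha⟩
termination_by c.sum
decreasing_by all_goals subst_vars; simp

theorem one_lt_rrTail (hc : Admissible c) (hne : c ≠ []) : 1 < rrTail c := by
  have hB := cont_snd_pos hc hne
  rw [rrTail_eq_div hc, one_lt_div (by exact_mod_cast hB)]
  exact_mod_cast (cont_snd_nonneg_and_lt hc).2

theorem ceil_rrTail_cons (ht : Admissible t) : ⌈rrTail (b :: t)⌉ = b := by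
  have h : 0 ≤ 1 / rrTail t ∧ 1 / rrTail t < 1 := by
    rcases eq_or_ne t [] with rfl | hne
    · simp [rrTail]
    · have := one_lt_rrTail ht hne
      exact ⟨by positivity, (div_lt_one (by linarith)).mpr this⟩
  rw [Int.ceil_eq_iff, rrTail]
  push_cast
  constructor <;> linarith

theorem rrTail_injOn : Set.InjOn rrTail {c | Admissible c} := by
  intro c hc c' hc' h
  induction c generalizing c' with
  | nil =>
    cases c' with
    | nil => rfl
    | cons b' t' => linarith [one_lt_rrTail hc' (List.cons_ne_nil b' t'), rrTail_nil]
  | cons b t ih =>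
    cases c' with
    | nil => linarith [one_lt_rrTail hc (List.cons_ne_nil b t), rrTail_nil]
    | cons b' t' =>
      have hb : b = b' := by
        exact_mod_cast (ceil_rrTail_cons hc.tail).symm.trans (h ▸ ceil_rrTail_cons hc'.tail)
      subst hb
      rw [rrTail, rrTail, sub_right_inj, one_div, one_div, inv_inj] at h
      rw [ih hc.tail hc'.tail h]

theorem rrcfVal_injOn : Set.InjOn rrcfVal {c | Admissible c} := by
  intro c hc c' hc' h
  rw [rrcfVal, rrcfVal, sub_right_inj, one_div, one_div, inv_inj] at h
  exact rrTail_injOn hc hc' h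

theorem rrcfVal_pos (hc : Admissible c) : 0 < rrcfVal c := by
  obtain ⟨hB, hBA⟩ := cont_snd_nonneg_and_lt hc
  rw [rrcfVal_eq_div hc]
  exact div_pos (by exact_mod_cast sub_pos.mpr hBA) (by exact_mod_cast cont_fst_pos hc)

theorem rrcfVal_lt_one (hc : Admissible c) (hne : c ≠ []) : rrcfVal c < 1 := by
  rw [rrcfVal_eq_div hc, div_lt_one (by exact_mod_cast cont_fst_pos hc)]
  exact_mod_cast sub_lt_self _ (cont_snd_pos hc hne)

theorem leftEnd_nonneg (hc : Admissible c) : 0 ≤ leftEnd c := by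
  rcases leftEnd_eq_zero_or hc with h | ⟨e, he, -, h⟩
  · exact h.ge
  · exact h ▸ (rrcfVal_pos he).le

theorem den_le_of_mem_Ioo (hc : Admissible c) (hne : c ≠ []) {q : ℚ}
    (hq : q ∈ Ioo (leftEnd c) (rightEnd c)) : (rrcfVal c).den ≤ q.den := by
  obtain ⟨hF, hv⟩ := fareyNeighbors_and_eq_mediant hc hne
  rw [hv, hF.den_mediant]
  exact hF.den_add_le hq.1 hq.2

theorem den_ends_lt (hc : Admissible c) (hne : c ≠ []) :
    (leftEnd c).den < (rrcfVal c).den ∧ (rightEnd c).den < (rrcfVal c).den := by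
  obtain ⟨hF, hv⟩ := fareyNeighbors_and_eq_mediant hc hne
  rw [hv, hF.den_mediant]
  exact ⟨by have := (rightEnd c).pos; omega, by have := (leftEnd c).pos; omega⟩

/-- Descend from `c` towards `[[1; g]]`: each step raises the denominator of the node, which never
exceeds that of `[[1; g]]` by `den_le_of_mem_Ioo`. -/
theorem sum_le_of_mem_Ioo {c g : List ℕ} (hc : Admissible c) (hne : c ≠ []) (hg : Admissible g)
    (hgI : rrcfVal g ∈ Ioo (leftEnd c) (rightEnd c)) : c.sum ≤ g.sum := by
  have hcg := den_le_of_mem_Ioo hc hne hgI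
  rcases lt_trichotomy (rrcfVal g) (rrcfVal c) with hlt | heq | hgt
  · have hc' : Admissible (c ++ [2]) := hc.append le_rfl
    have hgI' : rrcfVal g ∈ Ioo (leftEnd (c ++ [2])) (rightEnd (c ++ [2])) := by
      simpa using And.intro hgI.1 hlt
    have hdec : (rrcfVal c).den < (rrcfVal (c ++ [2])).den := by
      simpa using (den_ends_lt hc' (by simp)).2
    have hcg' := den_le_of_mem_Ioo hc' (by simp) hgI'
    have := sum_le_of_mem_Ioo hc' (by simp) hg hgI'
    simp only [List.sum_append, List.sum_singleton] at this
    omega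
  · rw [rrcfVal_injOn hg hc heq]
  · obtain ⟨t, a, rfl⟩ := (List.eq_nil_or_concat' c).resolve_left hne
    have hc' : Admissible (t ++ [a + 1]) := hc.of_append.append (by have := hc.last; omega)
    have hgI' : rrcfVal g ∈ Ioo (leftEnd (t ++ [a + 1])) (rightEnd (t ++ [a + 1])) := by
      simpa [leftEnd_append_succ t hc.last] using And.intro hgt hgI.2
    have hdec : (rrcfVal (t ++ [a])).den < (rrcfVal (t ++ [a + 1])).den := by
      simpa [leftEnd_append_succ t hc.last] using (den_ends_lt hc' (by simp)).1
    have hcg' := den_le_of_mem_Ioo hc' (by simp) hgI'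
    have := sum_le_of_mem_Ioo hc' (by simp) hg hgI'
    simp only [List.sum_append, List.sum_singleton] at this ⊢
    omega
termination_by (rrcfVal g).den - (rrcfVal c).den
decreasing_by all_goals subst_vars; omega

theorem leftEnd_lt_rrcfVal (hc : Admissible c) (hne : c ≠ []) : leftEnd c < rrcfVal c := by
  obtain ⟨hF, hv⟩ := fareyNeighbors_and_eq_mediant hc hne
  exact hv ▸ hF.mediant_left.lt

theorem rrcfVal_lt_rightEnd (hc : Admissible c) (hne : c ≠ []) : rrcfVal c < rightEnd c := by
  obtain ⟨hF, hv⟩ := fareyNeighbors_and_eq_mediant hc hne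
  exact hv ▸ hF.mediant_right.lt

theorem finite_setOf_admissible_sum_le (N : ℕ) :
    {c : List ℕ | Admissible c ∧ c.sum ≤ N}.Finite := by
  refine ((Set.finite_Iic N).biUnion fun m _ =>
    Set.finite_range (Composition.blocks (n := m))).subset ?_
  rintro c ⟨hc, hN⟩
  simp only [Set.mem_iUnion, Set.mem_range]
  exact ⟨c.sum, hN, ⟨c, fun hb => by have := hc _ hb; omega, rfl⟩, rfl⟩

theorem mem_Theta {k : ℕ} :
    q ∈ Theta k ↔ ∃ c, Admissible c ∧ c.sum = k + 1 ∧ rrcfVal c = q := by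
  constructor
  · rintro ⟨-, c, ⟨hc, rfl⟩, hs⟩
    exact ⟨c, hc, hs, rfl⟩
  · rintro ⟨c, hc, hs, rfl⟩
    have hne : c ≠ [] := by rintro rfl; simp at hs
    exact ⟨⟨rrcfVal_pos hc, rrcfVal_lt_one hc hne⟩, c, ⟨hc, rfl⟩, hs⟩

theorem mem_Xi :
    q ∈ Xi n ↔ q = 0 ∨ ∃ c, Admissible c ∧ c.sum ≤ n + 1 ∧ rrcfVal c = q := by
  simp only [Xi, Set.mem_union, Set.mem_insert_iff, Set.mem_singleton_iff, Set.mem_iUnion,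
    Finset.mem_Icc]
  constructor
  · rintro ((h | rfl) | ⟨k, hk, hq⟩)
    · exact Or.inl h
    · exact Or.inr ⟨[], fun _ h => absurd h List.not_mem_nil, by simp, rrcfVal_nil⟩
    · obtain ⟨c, hc, hs, rfl⟩ := mem_Theta.mp hq
      exact Or.inr ⟨c, hc, by omega, rfl⟩
  · rintro (h | ⟨c, hc, hs, rfl⟩)
    · exact Or.inl (Or.inl h)
    · rcases eq_or_ne c [] with rfl | hne
      · exact Or.inl (Or.inr rrcfVal_nil)
      · have h2 : 2 ≤ c.sum := by
          obtain ⟨b, t, rfl⟩ := List.exists_cons_of_ne_nil hne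
          have := hc.head
          simp only [List.sum_cons]
          omega
        exact Or.inr ⟨c.sum - 1, ⟨by omega, by omega⟩, mem_Theta.mpr ⟨c, hc, by omega, rfl⟩⟩

theorem nonneg_of_mem_Xi (hq : q ∈ Xi n) : 0 ≤ q := by
  rcases mem_Xi.mp hq with rfl | ⟨c, hc, -, rfl⟩
  exacts [le_rfl, (rrcfVal_pos hc).le]

theorem Xi_finite (n : ℕ) : (Xi n).Finite := by
  refine ((Set.finite_singleton 0).union
    ((finite_setOf_admissible_sum_le (n + 1)).image rrcfVal)).subset fun q hq => ?_
  rcases mem_Xi.mp hq with rfl | ⟨c, hc, hs, rfl⟩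
  exacts [Or.inl rfl, Or.inr ⟨c, ⟨hc, hs⟩, rfl⟩]

theorem leftEnd_mem_Xi (hc : Admissible c) (hs : c.sum ≤ n + 2) : leftEnd c ∈ Xi n := by
  rcases leftEnd_eq_zero_or hc with h | ⟨e, he, hes, h⟩
  · exact mem_Xi.mpr (Or.inl h)
  · exact mem_Xi.mpr (Or.inr ⟨e, he, by omega, h.symm⟩)

theorem Xi_inter_Ioo_eq_empty (hc : Admissible c) (hne : c ≠ []) (hs : n + 1 < c.sum) :
    Xi n ∩ Ioo (leftEnd c) (rightEnd c) = ∅ := by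
  refine Set.eq_empty_of_forall_notMem fun q ⟨hq, hI⟩ => ?_
  rcases mem_Xi.mp hq with rfl | ⟨g, hg, hgs, rfl⟩
  · exact (leftEnd_nonneg hc).not_gt hI.1
  · have := sum_le_of_mem_Ioo hc hne hg hI
    omega

theorem ncard_Xi_inter_Ioo_add_one (n : ℕ) {c : List ℕ} (hc : Admissible c) (hne : c ≠ [])
    (hs : c.sum ≤ n + 3) :
    (Xi n ∩ Ioo (leftEnd c) (rightEnd c)).ncard + 1 = Nat.fib (n + 4 - c.sum) := by
  by_cases hs' : n + 1 < c.sum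
  · rw [Xi_inter_Ioo_eq_empty hc hne hs', Set.ncard_empty]
    obtain h | h : n + 4 - c.sum = 1 ∨ n + 4 - c.sum = 2 := by omega
    all_goals simp [h]
  obtain ⟨t, a, rfl⟩ := (List.eq_nil_or_concat' c).resolve_left hne
  have ha := hc.last
  have hleft := ncard_Xi_inter_Ioo_add_one n (hc.append le_rfl) (by simp)
    (by simp at hs' ⊢; omega)
  have hright := ncard_Xi_inter_Ioo_add_one n (hc.of_append.append (by omega : 2 ≤ a + 1))
    (by simp) (by simp at hs' ⊢; omega)
  rw [leftEnd_append_two, rightEnd_append] at hleft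
  rw [leftEnd_append_succ t ha, rightEnd_append, ← rightEnd_append t a] at hright
  rw [Set.ncard_inter_Ioo (Xi_finite n) (leftEnd_lt_rrcfVal hc hne) (rrcfVal_lt_rightEnd hc hne)
    (mem_Xi.mpr (Or.inr ⟨_, hc, by omega, rfl⟩))]
  simp only [List.sum_append, List.sum_singleton] at hleft hright hs' ⊢
  obtain ⟨r, hr⟩ : ∃ r, n + 4 - (t.sum + a) = r + 2 := ⟨n + 2 - (t.sum + a), by omega⟩
  rw [hr, Nat.fib_add_two]
  rw [show n + 4 - (t.sum + a + 2) = r by omega] at hleft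
  rw [show n + 4 - (t.sum + (a + 1)) = r + 1 by omega] at hright
  omega
termination_by n + 3 - c.sum
decreasing_by
  all_goals
    subst_vars
    simp only [List.sum_append, List.sum_singleton] at *
    omega

theorem exists_node_rightEnd_eq {n : ℕ} {d : List ℕ} (hd : Admissible d)
    (hds : d.sum ≤ n + 1) :
    ∃ c, Admissible c ∧ c ≠ [] ∧ rightEnd c = rrcfVal d ∧ leftEnd c ∈ Xi n ∧ n + 1 < c.sum := by
  by_cases h : d.sum + 2 ≤ n + 1
  · have hc : Admissible (d ++ [n + 2 - d.sum]) := hd.append (by omega)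
    refine ⟨_, hc, by simp, rightEnd_append _ _, leftEnd_mem_Xi hc ?_, ?_⟩ <;> simp <;> omega
  · refine ⟨d ++ [2], hd.append le_rfl, by simp, rightEnd_append _ _, ?_, by simp; omega⟩
    rw [leftEnd_append_two]
    exact leftEnd_mem_Xi hd (by omega)

theorem IsConsecutive.exists_node {n : ℕ} {x y : ℚ} (h : IsConsecutive (Xi n) x y) :
    ∃ c, Admissible c ∧ c ≠ [] ∧ leftEnd c = x ∧ rightEnd c = y := by
  obtain ⟨hx, hy, hxy, hbetween⟩ := h
  have hy0 : y ≠ 0 := ((nonneg_of_mem_Xi hx).trans_lt hxy).ne'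
  obtain ⟨d, hd, hds, rfl⟩ := (mem_Xi.mp hy).resolve_left hy0
  obtain ⟨c, hc, hne, hR, hL, hs⟩ := exists_node_rightEnd_eq hd hds
  refine ⟨c, hc, hne, le_antisymm (not_lt.mp fun hlt => ?_) (not_lt.mp fun hlt => ?_), hR⟩
  · have := (leftEnd_lt_rrcfVal hc hne).trans (rrcfVal_lt_rightEnd hc hne)
    exact hbetween _ hL ⟨hlt, hR ▸ this⟩
  · exact (Xi_inter_Ioo_eq_empty hc hne hs).subset ⟨hx, hlt, hR ▸ hxy⟩

end RRCF

open RRCF in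
theorem ncard_upto_mediant_general
    (n : ℕ) (x y : ℚ) (hxy : IsConsecutive (Xi n) x y)
    (k : ℕ) (hk : mediant x y ∈ Theta k) :
    ∀ m : ℕ, k ≤ m →
      ({ξ ∈ Xi m | x < ξ ∧ ξ ≤ mediant x y}).ncard = Nat.fib (m - k + 1) := by
  intro m hm
  obtain ⟨c, hc, hne, rfl, rfl⟩ := hxy.exists_node
  rw [← (fareyNeighbors_and_eq_mediant hc hne).2] at hk ⊢
  obtain ⟨b, hb, hbs, hbc⟩ := mem_Theta.mp hk
  have hck : c.sum = k + 1 := rrcfVal_injOn hb hc hbc ▸ hbs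
  have hmem : rrcfVal c ∈ Xi m := mem_Xi.mpr (Or.inr ⟨c, hc, by omega, rfl⟩)
  have hset : {ξ ∈ Xi m | leftEnd c < ξ ∧ ξ ≤ rrcfVal c} =
      insert (rrcfVal c) (Xi m ∩ Ioo (leftEnd (c ++ [2])) (rightEnd (c ++ [2]))) := by
    rw [leftEnd_append_two, rightEnd_append, ← Set.inter_insert_of_mem hmem,
      Set.Ioo_insert_right (leftEnd_lt_rrcfVal hc hne)]
    rfl
  have hcount := ncard_Xi_inter_Ioo_add_one m (hc.append le_rfl) (by simp) (by simp; omega)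
  rw [hset, Set.ncard_insert_of_notMem (by simp) ((Xi_finite m).inter_of_left _), hcount]
  simp only [List.sum_append, List.sum_singleton, hck]
  congr 1
  omega

/-- if `x < y` are consecutive in `Ξ_n` and `x ⊕ y ∈ Θ_k`, then
for every `m ≥ k`, `#{ξ ∈ Ξ_m : x < ξ ≤ x ⊕ y} = F_{m-k+1}`. -/
theorem ncard_upto_mediant
    (n : ℕ) (hn : 1 ≤ n) (x y : ℚ) (hxy : IsConsecutive (Xi n) x y)
    (k : ℕ) (hk : mediant x y ∈ Theta k) :
    ∀ m : ℕ, k ≤ m →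
      ({ξ ∈ Xi m | x < ξ ∧ ξ ≤ mediant x y}).ncard = Nat.fib (m - k + 1) :=
  ncard_upto_mediant_general n x y hxy k hk
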